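/- Let 𝒱 be a finite set of views over schema σ, let Q be a CQ over σ, and let Q' be a CQ over σ_𝒱 that admits an expansion Q_E with respect to 𝒱. Then Q' is a 𝒱-rewriting of Q if and only if Q_E ≡ Q. -/

import Mathlib

/-- A relational atom (or fact): a relation symbol with a list of arguments.
Arguments are natural numbers, serving both as variables and as data values. -/
structure Atom where
  rel : ℕ
  args : List ℕ
deriving DecidableEq

/-- Apply a substitution to an atom. -/
def mapAtom (f : ℕ → ℕ) (A : Atom) : Atom := ⟨A.rel, A.args.map f⟩

/-- The variables of an atom. -/
def Atom.vars (A : Atom) : Finset ℕ := A.args.toFinset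

/-- The variables of a finite set of atoms. -/
def varsOf (B : Finset Atom) : Finset ℕ := B.biUnion Atom.vars

/-- A conjunctive query: a head atom and a finite set of body atoms. -/
structure CQ where
  head : Atom
  body : Finset Atom
deriving DecidableEq

/-- All variables of a conjunctive query. -/
def CQ.vars (Q : CQ) : Finset ℕ := Q.head.vars ∪ varsOf Q.body

/-- A schema: a set of relation symbols together with an arity function. -/
structure Schema where
  rels : Set ℕ
  ar : ℕ → ℕ

/-- An atom (or fact) over a schema. -/
def atomOver (σ : Schema) (A : Atom) : Prop :=
  A.rel ∈ σ.rels ∧ A.args.length = σ.ar A.rel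

/-- `Q` is a (well-formed) conjunctive query over schema `σ`:
nonempty body of σ-atoms, head relation symbol not in σ, and safety. -/
def isCQ (σ : Schema) (Q : CQ) : Prop :=
  Q.body.Nonempty ∧ (∀ A ∈ Q.body, atomOver σ A) ∧
  Q.head.rel ∉ σ.rels ∧ Q.head.vars ⊆ varsOf Q.body

/-- A database is a set of facts (finiteness is imposed where needed). -/
abbrev Database := Set Atom

/-- A database over a schema. -/
def isDBOver (σ : Schema) (D : Database) : Prop := ∀ F ∈ D, atomOver σ F

/-- The result of a conjunctive query on a database. -/
def evalCQ (Q : CQ) (D : Database) : Set Atom :=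
  { F | ∃ ν : ℕ → ℕ, (∀ A ∈ Q.body, mapAtom ν A ∈ D) ∧ mapAtom ν Q.head = F }

/-- Containment of conjunctive queries. -/
def containedCQ (Q1 Q2 : CQ) : Prop :=
  ∀ D : Database, D.Finite → evalCQ Q1 D ⊆ evalCQ Q2 D

/-- Equivalence of conjunctive queries. -/
def equivCQ (Q1 Q2 : CQ) : Prop :=
  ∀ D : Database, D.Finite → evalCQ Q1 D = evalCQ Q2 D

/-- A conjunctive query is minimal if no equivalent CQ has strictly fewer body atoms. -/
def isMinimal (Q : CQ) : Prop :=
  ∀ Q2 : CQ, equivCQ Q Q2 → Q.body.card ≤ Q2.body.card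

/-- A homomorphism from `Q2` to `Q1`. -/
def isHom (h : ℕ → ℕ) (Q2 Q1 : CQ) : Prop :=
  (∀ A ∈ Q2.body, mapAtom h A ∈ Q1.body) ∧ mapAtom h Q2.head = Q1.head

/-- A body homomorphism from `Q2` to `Q1`. -/
def isBodyHom (h : ℕ → ℕ) (Q2 Q1 : CQ) : Prop :=
  ∀ A ∈ Q2.body, mapAtom h A ∈ Q1.body

/-- A set of views over σ: each view is a CQ over σ and views have
pairwise distinct head relation symbols. -/
def isViewSet (σ : Schema) (𝒱 : Finset CQ) : Prop :=
  (∀ V ∈ 𝒱, isCQ σ V) ∧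
  ∀ V ∈ 𝒱, ∀ W ∈ 𝒱, V ≠ W → V.head.rel ≠ W.head.rel

/-- The 𝒱-defined database 𝒱(D). -/
def viewDB (𝒱 : Finset CQ) (D : Database) : Database :=
  ⋃ V ∈ 𝒱, evalCQ V D

/-- `Q'` is a CQ over the schema σ_𝒱 of the head relations of the views 𝒱. -/
def overViews (𝒱 : Finset CQ) (Q' : CQ) : Prop :=
  Q'.body.Nonempty ∧
  (∀ A ∈ Q'.body, ∃ V ∈ 𝒱, A.rel = V.head.rel ∧ A.args.length = V.head.args.length) ∧
  (∀ V ∈ 𝒱, Q'.head.rel ≠ V.head.rel) ∧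
  Q'.head.vars ⊆ varsOf Q'.body

/-- `Q'` is a 𝒱-rewriting of `Q`: `Q'` is over σ_𝒱 and `Q'(𝒱(D)) = Q(D)`
for every (finite) database `D` over σ. -/
def isRewriting (σ : Schema) (𝒱 : Finset CQ) (Q Q' : CQ) : Prop :=
  overViews 𝒱 Q' ∧
  ∀ D : Database, D.Finite → isDBOver σ D →
    evalCQ Q' (viewDB 𝒱 D) = evalCQ Q D

/-- `T` is a join tree for the atom set `B`. -/
def joinTreeProp (B : Finset Atom) (T : SimpleGraph {A : Atom // A ∈ B}) : Prop :=
  T.IsTree ∧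
  ∀ (x : ℕ) (A A' : {A : Atom // A ∈ B}) (p : T.Walk A A'), p.IsPath →
    x ∈ A.1.vars → x ∈ A'.1.vars → ∀ C ∈ p.support, x ∈ C.1.vars

/-- The atom set `B` has a join tree. -/
def hasJoinTree (B : Finset Atom) : Prop :=
  ∃ T : SimpleGraph {A : Atom // A ∈ B}, joinTreeProp B T

/-- A conjunctive query is acyclic if its body has a join tree. -/
def isAcyclicCQ (Q : CQ) : Prop := hasJoinTree Q.body

/-- A conjunctive query is free-connex acyclic. -/
def isFreeConnex (Q : CQ) : Prop :=
  isAcyclicCQ Q ∧ hasJoinTree (insert Q.head Q.body)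

/-- The bridge variables of `𝒜 ⊆ body(Q)`. -/
def bvars (Q : CQ) (𝒜 : Finset Atom) : Finset ℕ :=
  varsOf 𝒜 ∩ (Q.head.vars ∪ varsOf (Q.body \ 𝒜))

/-- An application of a view `V`: a substitution that does not unify any
quantified variable of `V` with another variable of `V`. -/
def isApplication (V : CQ) (α : ℕ → ℕ) : Prop :=
  ∀ x ∈ varsOf V.body, x ∉ V.head.vars →
    ∀ y ∈ CQ.vars V, y ≠ x → α x ≠ α y

/-- The query α(V). -/
def applyCQ (α : ℕ → ℕ) (V : CQ) : CQ :=
  ⟨mapAtom α V.head, V.body.image (mapAtom α)⟩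

/-- `(𝒜, V, α, ψ)` is a cover description for `Q`. -/
def isCoverDesc (Q : CQ) (𝒜 : Finset Atom) (V : CQ) (α ψ : ℕ → ℕ) : Prop :=
  𝒜 ⊆ Q.body ∧ isApplication V α ∧
  𝒜 ⊆ V.body.image (mapAtom α) ∧
  bvars Q 𝒜 ⊆ V.head.vars.image α ∧
  isBodyHom ψ (applyCQ α V) Q ∧
  ∀ x ∈ varsOf 𝒜, ψ x = x

/-- A cover partition for `Q` over `𝒱`: a collection of cover descriptions
whose atom sets partition `body(Q)`. -/
def isCoverPartition (Q : CQ) (𝒱 : Finset CQ) (m : ℕ)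
    (𝒜 : Fin m → Finset Atom) (V : Fin m → CQ) (α ψ : Fin m → ℕ → ℕ) : Prop :=
  (∀ i, V i ∈ 𝒱 ∧ isCoverDesc Q (𝒜 i) (V i) (α i) (ψ i)) ∧
  ∀ A ∈ Q.body, ∃! i, A ∈ 𝒜 i

/-- Consistency of a cover partition: a variable of any `α_j(V_j)` lies in the
range of another `α_i` only if it also lies in `bvars(𝒜_j)`. -/
def isConsistent (Q : CQ) (m : ℕ) (𝒜 : Fin m → Finset Atom) (V : Fin m → CQ)
    (α : Fin m → ℕ → ℕ) : Prop :=
  ∀ i j : Fin m, i ≠ j → ∀ z ∈ CQ.vars (applyCQ (α j) (V j)),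
    (∃ x ∈ CQ.vars (V i), α i x = z) → z ∈ bvars Q (𝒜 j)

/-- The query `Q_𝒞` induced by a (consistent) cover partition. -/
def inducedCQ (Q : CQ) (m : ℕ) (V : Fin m → CQ) (α : Fin m → ℕ → ℕ) : CQ :=
  ⟨Q.head, Finset.image (fun i => mapAtom (α i) (V i).head) Finset.univ⟩

/-- Quantified variable disjointness for a family of view applications. -/
def QVD (m : ℕ) (V : Fin m → CQ) (α : Fin m → ℕ → ℕ) : Prop :=
  ∀ i j : Fin m, i ≠ j → ∀ x ∈ varsOf (V i).body, x ∉ (V i).head.vars →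
    ∀ y ∈ CQ.vars (V j), α i x ≠ α j y

/-- `QE` is an expansion of `Q'` with respect to the views `𝒱`. -/
def isExpansion (𝒱 : Finset CQ) (Q' QE : CQ) : Prop :=
  ∃ (m : ℕ) (A' : Fin m → Atom) (V : Fin m → CQ) (α : Fin m → ℕ → ℕ),
    (∀ i, V i ∈ 𝒱 ∧ isApplication (V i) (α i) ∧ A' i = mapAtom (α i) (V i).head) ∧
    Q'.body = Finset.image A' Finset.univ ∧
    QVD m V α ∧
    QE.head = Q'.head ∧
    QE.body = Finset.biUnion Finset.univ (fun i => (V i).body.image (mapAtom (α i)))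

/-- `atoms(x)`: the body atoms of `Q` containing the variable `x`. -/
def atomsWith (Q : CQ) (x : ℕ) : Finset Atom :=
  Q.body.filter (fun A => x ∈ A.vars)

/-- Hierarchical conjunctive queries. -/
def isHierarchical (Q : CQ) : Prop :=
  ∀ x y : ℕ, atomsWith Q x ⊆ atomsWith Q y ∨ atomsWith Q y ⊆ atomsWith Q x ∨
    atomsWith Q x ∩ atomsWith Q y = ∅

/-- q-hierarchical conjunctive queries. -/
def isQHierarchical (Q : CQ) : Prop :=
  isHierarchical Q ∧ ∀ x y : ℕ, atomsWith Q x ⊂ atomsWith Q y →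
    x ∈ Q.head.vars → y ∈ Q.head.vars

/-- `P` is a partition of `body(Q)` witnessing weak head arity at most `k`. -/
def witnessesWHA (Q : CQ) (k n : ℕ) (P : Fin n → Finset Atom) : Prop :=
  (∀ i, (P i).Nonempty) ∧ (∀ i, P i ⊆ Q.body) ∧ (∀ A ∈ Q.body, ∃! i, A ∈ P i) ∧
  (∀ i, (varsOf (P i) ∩ Q.head.vars).card ≤ k) ∧
  (∀ i j, i ≠ j → ∀ x ∈ varsOf (P i), x ∈ varsOf (P j) → x ∈ Q.head.vars)

/-- `Q` has weak head arity at most `k`. -/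
def hasWHAle (Q : CQ) (k : ℕ) : Prop := ∃ n P, witnessesWHA Q k n P

/-- The weak head arity of `Q`. -/
noncomputable def weakHeadArity (Q : CQ) : ℕ := sInf {k | hasWHAle Q k}

/-- The cover graph of `Q`: vertices are the body atoms, with an edge between
two atoms iff they share a variable not occurring in the head. -/
def coverGraph (Q : CQ) : SimpleGraph {A : Atom // A ∈ Q.body} :=
  SimpleGraph.fromRel (fun A B => ∃ x, x ∈ A.1.vars ∧ x ∈ B.1.vars ∧ x ∉ Q.head.vars)

/-- A subset `s` of the atom set `B` is connected in the (join) tree `T`. -/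
def connectedIn (B : Finset Atom) (T : SimpleGraph {A : Atom // A ∈ B}) (s : Finset Atom) : Prop :=
  (T.induce {A : {A : Atom // A ∈ B} | A.1 ∈ s}).Connected

/-!
Evaluating `Q'` on `𝒱(D)` is the same as evaluating its expansion `Q_E` on `D`. One inclusion
composes a valuation of `Q_E` with the applications `α_i`. For the other, a valuation `ν'` of
`Q'` over `𝒱(D)` yields, for each view atom, a valuation `μ_i` of `V_i` over `D` that agrees
with `ν' ∘ α_i` on the head variables. By quantified variable disjointness the images of the
quantified variables under the `α_i` are pairwise distinct and miss the images of all other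
variables, so the `μ_i` glue into a single valuation of `Q_E`. Finally `Q_E` and `Q` only read
σ-facts, so agreeing on all databases over σ is the same as being equivalent.
-/

lemma mapAtom_mapAtom (f g : ℕ → ℕ) (A : Atom) :
    mapAtom f (mapAtom g A) = mapAtom (f ∘ g) A := by
  simp [mapAtom]

lemma mapAtom_congr {f g : ℕ → ℕ} {A : Atom} (h : ∀ x ∈ A.vars, f x = g x) :
    mapAtom f A = mapAtom g A := by
  simp only [Atom.vars, List.mem_toFinset] at h
  simp only [mapAtom, List.map_inj_left.mpr h]

lemma eq_of_mapAtom_eq_mapAtom {f g : ℕ → ℕ} {A : Atom} (h : mapAtom f A = mapAtom g A)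
    {x : ℕ} (hx : x ∈ A.vars) : f x = g x :=
  List.map_inj_left.mp (congrArg Atom.args h) x (List.mem_toFinset.mp hx)

lemma atomOver_mapAtom {σ : Schema} {A : Atom} (h : atomOver σ A) (f : ℕ → ℕ) :
    atomOver σ (mapAtom f A) :=
  ⟨h.1, by simpa [mapAtom] using h.2⟩

lemma mem_varsOf {B : Finset Atom} {x : ℕ} : x ∈ varsOf B ↔ ∃ A ∈ B, x ∈ A.vars :=
  Finset.mem_biUnion

lemma evalCQ_eq_evalCQ_sep_atomOver {σ : Schema} {Q : CQ} (hQ : ∀ A ∈ Q.body, atomOver σ A)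
    (D : Database) : evalCQ Q D = evalCQ Q {F ∈ D | atomOver σ F} := by
  ext F
  constructor
  · rintro ⟨ν, hν, rfl⟩
    exact ⟨ν, fun A hA => ⟨hν A hA, atomOver_mapAtom (hQ A hA) ν⟩, rfl⟩
  · rintro ⟨ν, hν, rfl⟩
    exact ⟨ν, fun A hA => (hν A hA).1, rfl⟩

lemma mem_viewDB_iff {𝒱 : Finset CQ}
    (hdist : ∀ V ∈ 𝒱, ∀ W ∈ 𝒱, V ≠ W → V.head.rel ≠ W.head.rel)
    {V : CQ} (hV : V ∈ 𝒱) {F : Atom} (hF : F.rel = V.head.rel) (D : Database) :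
    F ∈ viewDB 𝒱 D ↔ F ∈ evalCQ V D := by
  simp only [viewDB, Set.mem_iUnion]
  refine ⟨fun ⟨W, hW, hFW⟩ => ?_, fun hFV => ⟨V, hV, hFV⟩⟩
  obtain ⟨μ, hμ, rfl⟩ := hFW
  obtain rfl : W = V := by
    by_contra hne
    exact hdist W hW V hV hne hF
  exact ⟨μ, hμ, rfl⟩

def quantVars (V : CQ) : Finset ℕ := varsOf V.body \ V.head.vars

section Gluing

variable {m : ℕ} {V : Fin m → CQ} {α : Fin m → ℕ → ℕ}

lemma eq_of_apply_eq_apply_quantVars (hα : ∀ i, isApplication (V i) (α i)) (hqvd : QVD m V α)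
    {i j : Fin m} {x y : ℕ} (hx : x ∈ quantVars (V i)) (hy : y ∈ CQ.vars (V j))
    (h : α j y = α i x) : j = i ∧ y = x := by
  obtain ⟨hxb, hxh⟩ := Finset.mem_sdiff.mp hx
  by_cases hji : j = i
  · subst hji
    exact ⟨rfl, by_contra fun hne => hα j x hxb hxh y hy hne h.symm⟩
  · exact absurd h.symm (hqvd i j (Ne.symm hji) x hxb hxh y hy)

lemma exists_valuation_comp_eq (hα : ∀ i, isApplication (V i) (α i)) (hqvd : QVD m V α)
    (ν' : ℕ → ℕ) (μ : Fin m → ℕ → ℕ) (hμ : ∀ i, ∀ x ∈ (V i).head.vars, μ i x = ν' (α i x)) :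
    ∃ ν : ℕ → ℕ, ∀ i, ∀ x ∈ CQ.vars (V i), ν (α i x) = μ i x := by
  let f : {p : Fin m × ℕ // p.2 ∈ quantVars (V p.1)} → ℕ := fun p => α p.1.1 p.1.2
  have hf : Function.Injective f := by
    rintro ⟨⟨i, x⟩, hx⟩ ⟨⟨j, y⟩, hy⟩ h
    obtain ⟨rfl, rfl⟩ := eq_of_apply_eq_apply_quantVars hα hqvd hx (Finset.mem_union_right _
      (Finset.mem_sdiff.mp hy).1) h.symm
    rfl
  refine ⟨Function.extend f (fun p => μ p.1.1 p.1.2) ν', fun i x hx => ?_⟩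
  by_cases hq : x ∈ quantVars (V i)
  · exact hf.extend_apply _ _ ⟨(i, x), hq⟩
  · have hxh : x ∈ (V i).head.vars := by
      by_contra hxh
      exact hq (Finset.mem_sdiff.mpr ⟨(Finset.mem_union.mp hx).resolve_left hxh, hxh⟩)
    rw [Function.extend_apply' _ _ _ ?_, hμ i x hxh]
    rintro ⟨⟨⟨j, y⟩, hy⟩, h⟩
    obtain ⟨rfl, rfl⟩ := eq_of_apply_eq_apply_quantVars hα hqvd hy hx h.symm
    exact hq hy

end Gluing

section Expansion

variable {𝒱 : Finset CQ} {Q' QE : CQ}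

lemma evalCQ_subset_evalCQ_viewDB_of_isExpansion (hE : isExpansion 𝒱 Q' QE) (D : Database) :
    evalCQ QE D ⊆ evalCQ Q' (viewDB 𝒱 D) := by
  obtain ⟨m, A', V, α, hV, hQ'body, -, hhead, hQEbody⟩ := hE
  rintro _ ⟨ν, hν, rfl⟩
  refine ⟨ν, ?_, by rw [hhead]⟩
  simp only [hQ'body, Finset.mem_image, Finset.mem_univ, true_and, forall_exists_index,
    forall_apply_eq_imp_iff]
  intro i
  refine Set.mem_biUnion (hV i).1 ⟨ν ∘ α i, fun B hB => ?_, by rw [(hV i).2.2, mapAtom_mapAtom]⟩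
  rw [← mapAtom_mapAtom]
  exact hν _ (hQEbody ▸ Finset.mem_biUnion.mpr ⟨i, Finset.mem_univ i, Finset.mem_image_of_mem _ hB⟩)

lemma evalCQ_viewDB_subset_evalCQ_of_isExpansion
    (hdist : ∀ V ∈ 𝒱, ∀ W ∈ 𝒱, V ≠ W → V.head.rel ≠ W.head.rel)
    (hsafe : Q'.head.vars ⊆ varsOf Q'.body) (hE : isExpansion 𝒱 Q' QE) (D : Database) :
    evalCQ Q' (viewDB 𝒱 D) ⊆ evalCQ QE D := by
  obtain ⟨m, A', V, α, hV, hQ'body, hqvd, hhead, hQEbody⟩ := hE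
  rintro _ ⟨ν', hν', rfl⟩
  have hA'mem : ∀ i, A' i ∈ Q'.body := fun i => hQ'body ▸ Finset.mem_image_of_mem A' (by simp)
  have hview : ∀ i, mapAtom ν' (A' i) ∈ evalCQ (V i) D := fun i =>
    (mem_viewDB_iff hdist (hV i).1 (by rw [(hV i).2.2]; rfl) D).mp (hν' _ (hA'mem i))
  choose μ hμbody hμhead using hview
  have hμ : ∀ i, ∀ x ∈ (V i).head.vars, μ i x = ν' (α i x) := fun i x hx =>
    eq_of_mapAtom_eq_mapAtom (f := μ i) (g := ν' ∘ α i)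
      (by rw [hμhead, (hV i).2.2, mapAtom_mapAtom]) hx
  obtain ⟨ν, hν⟩ := exists_valuation_comp_eq (fun i => (hV i).2.1) hqvd ν' μ hμ
  refine ⟨ν, ?_, ?_⟩
  · simp only [hQEbody, Finset.mem_biUnion, Finset.mem_univ, Finset.mem_image, true_and]
    rintro _ ⟨i, B, hB, rfl⟩
    rw [mapAtom_mapAtom, mapAtom_congr (f := ν ∘ α i) (g := μ i) fun x hx =>
      hν i x (Finset.mem_union_right _ (mem_varsOf.mpr ⟨B, hB, hx⟩))]
    exact hμbody i B hB
  · rw [hhead]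
    refine mapAtom_congr fun z hz => ?_
    obtain ⟨A, hA, hzA⟩ := mem_varsOf.mp (hsafe hz)
    obtain ⟨i, -, rfl⟩ := Finset.mem_image.mp (hQ'body ▸ hA)
    rw [(hV i).2.2] at hzA
    obtain ⟨y, hy, rfl⟩ := List.mem_map.mp (List.mem_toFinset.mp hzA)
    have hy : y ∈ (V i).head.vars := List.mem_toFinset.mpr hy
    exact (hν i y (Finset.mem_union_left _ hy)).trans (hμ i y hy)

theorem evalCQ_viewDB_eq_evalCQ_of_isExpansion
    (hdist : ∀ V ∈ 𝒱, ∀ W ∈ 𝒱, V ≠ W → V.head.rel ≠ W.head.rel)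
    (hsafe : Q'.head.vars ⊆ varsOf Q'.body) (hE : isExpansion 𝒱 Q' QE) (D : Database) :
    evalCQ Q' (viewDB 𝒱 D) = evalCQ QE D :=
  (evalCQ_viewDB_subset_evalCQ_of_isExpansion hdist hsafe hE D).antisymm
    (evalCQ_subset_evalCQ_viewDB_of_isExpansion hE D)

lemma atomOver_of_mem_body_of_isExpansion {σ : Schema}
    (h𝒱 : ∀ V ∈ 𝒱, ∀ A ∈ V.body, atomOver σ A) (hE : isExpansion 𝒱 Q' QE) :
    ∀ A ∈ QE.body, atomOver σ A := by
  obtain ⟨m, A', V, α, hV, -, -, -, hQEbody⟩ := hE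
  simp only [hQEbody, Finset.mem_biUnion, Finset.mem_univ, Finset.mem_image, true_and]
  rintro _ ⟨i, B, hB, rfl⟩
  exact atomOver_mapAtom (h𝒱 (V i) (hV i).1 B hB) (α i)

end Expansion

theorem statement15_general (σ : Schema) (𝒱 : Finset CQ) (h𝒱 : isViewSet σ 𝒱)
    (Q : CQ) (hQ : isCQ σ Q)
    (Q' : CQ) (hQ' : overViews 𝒱 Q')
    (QE : CQ) (hE : isExpansion 𝒱 Q' QE) :
    isRewriting σ 𝒱 Q Q' ↔ equivCQ QE Q := by
  have hexp := evalCQ_viewDB_eq_evalCQ_of_isExpansion h𝒱.2 hQ'.2.2.2 hE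
  have hQEσ := atomOver_of_mem_body_of_isExpansion (fun V hV => (h𝒱.1 V hV).2.1) hE
  constructor
  · rintro ⟨-, hrw⟩ D hD
    have hσ := hrw {F ∈ D | atomOver σ F} (hD.subset (Set.sep_subset _ _)) fun F hF => hF.2
    rw [evalCQ_eq_evalCQ_sep_atomOver hQEσ, evalCQ_eq_evalCQ_sep_atomOver hQ.2.1, ← hexp, hσ]
  · exact fun hequiv => ⟨hQ', fun D hD _ => (hexp D).trans (hequiv D hD)⟩

/-- Let `Q'` be a CQ over `σ_𝒱` that admits an expansion `QE` w.r.t.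
`𝒱`. Then `Q'` is a 𝒱-rewriting of `Q` if and only if `QE ≡ Q`. -/
theorem statement15 (σ : Schema) (𝒱 : Finset CQ) (h𝒱 : isViewSet σ 𝒱)
    (Q : CQ) (hQ : isCQ σ Q) (hfresh : ∀ V ∈ 𝒱, Q.head.rel ≠ V.head.rel)
    (Q' : CQ) (hQ' : overViews 𝒱 Q')
    (QE : CQ) (hE : isExpansion 𝒱 Q' QE) :
    isRewriting σ 𝒱 Q Q' ↔ equivCQ QE Q :=
  statement15_general σ 𝒱 h𝒱 Q hQ Q' hQ' QE hE
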